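/- arXiv:2002.11955 — 6 statements merged into one kernel-verified Lean document; each statement's English description precedes it below -/
import Mathlib

section
/- Let Y, v_i, v_j, v_k be bounded real random variables on a common probability space with Y^2 = 1 almost surely. Suppose the pairs (v_i*Y, v_j*Y), (v_i*Y, v_k*Y), and (v_j*Y, v_k*Y) are each independent. Then E[v_i * v_j] = E[v_i*Y] * E[v_j*Y], E[v_i * v_k] = E[v_i*Y] * E[v_k*Y], and E[v_j * v_k] = E[v_j*Y] * E[v_k*Y]; consequently, if E[v_j * v_k] ≠ 0, then E[v_i*Y]^2 = E[v_i*v_j] * E[v_i*v_k] / E[v_j*v_k]. -/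
open MeasureTheory ProbabilityTheory

/-! Since `Y² = 1` almost surely, `vᵢ vⱼ = (vᵢ Y)(vⱼ Y)` almost surely, so pairwise independence
of the signed variables `v Y` factors every observable product moment `E[vᵢ vⱼ]` into the
product of accuracies `aᵢ aⱼ`. The closed form for `aᵢ²` is then the identity
`a² = (a b)(a c) / (b c)`. -/

section

variable {Ω : Type*} [MeasurableSpace Ω] {μ : Measure Ω} {Y : Ω → ℝ}

theorem integral_mul_eq_integral_mul_mul_mul_of_sq_eq_one (hY : ∀ᵐ ω ∂μ, Y ω ^ 2 = 1)
    (u v : Ω → ℝ) : ∫ ω, u ω * v ω ∂μ = ∫ ω, (u ω * Y ω) * (v ω * Y ω) ∂μ := by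
  refine integral_congr_ae ?_
  filter_upwards [hY] with ω hω
  linear_combination (-(u ω * v ω)) * hω

theorem integral_mul_eq_mul_integral_of_indepFun_mul (hY : ∀ᵐ ω ∂μ, Y ω ^ 2 = 1)
    {u v : Ω → ℝ} (hu : AEStronglyMeasurable (fun ω => u ω * Y ω) μ)
    (hv : AEStronglyMeasurable (fun ω => v ω * Y ω) μ)
    (huv : IndepFun (fun ω => u ω * Y ω) (fun ω => v ω * Y ω) μ) :
    ∫ ω, u ω * v ω ∂μ = (∫ ω, u ω * Y ω ∂μ) * ∫ ω, v ω * Y ω ∂μ := by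
  rw [integral_mul_eq_integral_mul_mul_mul_of_sq_eq_one hY]
  exact huv.integral_fun_mul_eq_mul_integral hu hv

end

theorem sq_eq_mul_mul_div_mul {K : Type*} [Field K] (a : K) {b c : K} (hbc : b * c ≠ 0) :
    a ^ 2 = a * b * (a * c) / (b * c) := by
  rw [eq_div_iff hbc]
  ring

theorem triplet_method_correct_general {Ω : Type*} [MeasureSpace Ω]
    [IsProbabilityMeasure (ℙ : Measure Ω)]
    (Y vi vj vk : Ω → ℝ)
    (hY : Measurable Y) (hvi : Measurable vi) (hvj : Measurable vj) (hvk : Measurable vk)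
    (hYsq : ∀ᵐ ω ∂(ℙ : Measure Ω), (Y ω) ^ 2 = 1)
    (hij : IndepFun (fun ω => vi ω * Y ω) (fun ω => vj ω * Y ω) ℙ)
    (hik : IndepFun (fun ω => vi ω * Y ω) (fun ω => vk ω * Y ω) ℙ)
    (hjk : IndepFun (fun ω => vj ω * Y ω) (fun ω => vk ω * Y ω) ℙ) :
    (∫ ω, vi ω * vj ω) = (∫ ω, vi ω * Y ω) * (∫ ω, vj ω * Y ω) ∧
    (∫ ω, vi ω * vk ω) = (∫ ω, vi ω * Y ω) * (∫ ω, vk ω * Y ω) ∧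
    (∫ ω, vj ω * vk ω) = (∫ ω, vj ω * Y ω) * (∫ ω, vk ω * Y ω) ∧
    ((∫ ω, vj ω * vk ω) ≠ 0 →
      (∫ ω, vi ω * Y ω) ^ 2 =
        (∫ ω, vi ω * vj ω) * (∫ ω, vi ω * vk ω) / (∫ ω, vj ω * vk ω)) := by
  have hiY := (hvi.mul hY).aestronglyMeasurable (μ := ℙ)
  have hjY := (hvj.mul hY).aestronglyMeasurable (μ := ℙ)
  have hkY := (hvk.mul hY).aestronglyMeasurable (μ := ℙ)
  have h_ij := integral_mul_eq_mul_integral_of_indepFun_mul hYsq hiY hjY hij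
  have h_ik := integral_mul_eq_mul_integral_of_indepFun_mul hYsq hiY hkY hik
  have h_jk := integral_mul_eq_mul_integral_of_indepFun_mul hYsq hjY hkY hjk
  refine ⟨h_ij, h_ik, h_jk, fun hne => ?_⟩
  rw [h_ij, h_ik, h_jk]
  exact sq_eq_mul_mul_div_mul _ (h_jk ▸ hne)

/-- Correctness of the triplet method: if `Y² = 1` a.s. and the pairs
`(vᵢY, vⱼY)`, `(vᵢY, vₖY)`, `(vⱼY, vₖY)` are each independent, then the pairwise
product expectations factor as products of accuracies, and consequently the squared
accuracy `E[vᵢY]²` is recoverable in closed form from observable quantities. -/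
theorem triplet_method_correct {Ω : Type*} [MeasureSpace Ω]
    [IsProbabilityMeasure (ℙ : Measure Ω)]
    (Y vi vj vk : Ω → ℝ)
    (hY : Measurable Y) (hvi : Measurable vi) (hvj : Measurable vj) (hvk : Measurable vk)
    (hYb : ∃ C : ℝ, ∀ ω, |Y ω| ≤ C) (hvib : ∃ C : ℝ, ∀ ω, |vi ω| ≤ C)
    (hvjb : ∃ C : ℝ, ∀ ω, |vj ω| ≤ C) (hvkb : ∃ C : ℝ, ∀ ω, |vk ω| ≤ C)
    (hYsq : ∀ᵐ ω ∂(ℙ : Measure Ω), (Y ω) ^ 2 = 1)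
    (hij : IndepFun (fun ω => vi ω * Y ω) (fun ω => vj ω * Y ω) ℙ)
    (hik : IndepFun (fun ω => vi ω * Y ω) (fun ω => vk ω * Y ω) ℙ)
    (hjk : IndepFun (fun ω => vj ω * Y ω) (fun ω => vk ω * Y ω) ℙ) :
    (∫ ω, vi ω * vj ω) = (∫ ω, vi ω * Y ω) * (∫ ω, vj ω * Y ω) ∧
    (∫ ω, vi ω * vk ω) = (∫ ω, vi ω * Y ω) * (∫ ω, vk ω * Y ω) ∧
    (∫ ω, vj ω * vk ω) = (∫ ω, vj ω * Y ω) * (∫ ω, vk ω * Y ω) ∧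
    ((∫ ω, vj ω * vk ω) ≠ 0 →
      (∫ ω, vi ω * Y ω) ^ 2 =
        (∫ ω, vi ω * vj ω) * (∫ ω, vi ω * vk ω) / (∫ ω, vj ω * vk ω)) :=
  triplet_method_correct_general Y vi vj vk hY hvi hvj hvk hYsq hij hik hjk
end

section
/- Define 2·3^s × 2·3^s real matrices A_s, B_s recursively by A_0 = [[1,1],[1,0]], B_0 = [[0,0],[0,1]], and A_s = D ⊗ A_{s−1} + E ⊗ B_{s−1}, B_s = E ⊗ A_{s−1} + D ⊗ B_{s−1}, where D = [[1,1,1],[1,0,0],[0,1,0]], E = [[0,0,0],[0,0,1],[0,0,0]], and ⊗ is the Kronecker product. Let Y, λ_1, …, λ_s be random variables with Y ∈ {−1,1} and each λ_i ∈ {−1,0,1}. Let μ ∈ ℝ^{2·3^s} be the vector of joint probabilities P(Y = ε, λ_1 = c_1, …, λ_s = c_s), indexed so that ε alternates through (1, −1) with period 2 (fastest), and c_i cycles through (1, 0, −1), changing every 2·3^{i−1} entries. Let r ∈ ℝ^{2·3^s} be indexed by assignments in which Y is tagged 'absent' or 'in Z' (alternating with period 2, in that order) and each λ_i is tagged 'absent',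 'in Z', or 'in U' (changing every 2·3^{i−1} entries, in that order), with entry r(U, Z) = P( Π_{z ∈ Z} z = 1 and λ_j = 0 for all λ_j ∈ U ), where the product over an empty Z equals 1 (so in particular the first entry equals 1 when U is also empty). Likewise let r^B have entries r^B(U, Z) = P( Π_{z ∈ Z} z = −1 and λ_j = 0 for all λ_j ∈ U ) when Z ≠ ∅ and r^B(U, ∅) = 0, with the same indexing. Then A_s μ = r and B_s μ = r^B. -/
open Finset Matrix MeasureTheory ProbabilityTheory
open scoped Kronecker

/-- Index type for a clique of `s` sources and one task: `Idx s ≅ Fin (2·3^s)`,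
identified row-major so that the `Fin 2` (task) component is the fastest-varying
(period 2) and the `Fin 3` component of the `i`-th source (1-based) changes every
`2·3^(i-1)` entries. -/
@[reducible]
def Idx : ℕ → Type
  | 0 => Fin 2
  | s + 1 => Fin 3 × Idx s

instance fintypeIdx : ∀ s, Fintype (Idx s)
  | 0 => inferInstanceAs (Fintype (Fin 2))
  | s + 1 => letI := fintypeIdx s; inferInstanceAs (Fintype (Fin 3 × Idx s))

/-- The `Fin 2` component of an index (the tag of the task `Y`). -/
def eps : ∀ s, Idx s → Fin 2
  | 0, p => p
  | s + 1, p => eps s p.2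

/-- The `Fin 3` component of an index belonging to the `i`-th source. -/
def tag : ∀ s, Idx s → Fin s → Fin 3
  | 0, _, i => i.elim0
  | s + 1, p, i => if h : (i : ℕ) < s then tag s p.2 ⟨i, h⟩ else p.1

/-- Value of a source tag in the `μ`-indexing: cycles through `(1, 0, -1)`. -/
def cval : Fin 3 → ℝ := ![1, 0, -1]

/-- Value of the task tag in the `μ`-indexing: alternates through `(1, -1)`. -/
def yval : Fin 2 → ℝ := ![1, -1]

/-- `D = [[1,1,1],[1,0,0],[0,1,0]]`. -/
def Dm : Matrix (Fin 3) (Fin 3) ℝ := !![1, 1, 1; 1, 0, 0; 0, 1, 0]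

/-- `E = [[0,0,0],[0,0,1],[0,0,0]]`. -/
def Em : Matrix (Fin 3) (Fin 3) ℝ := !![0, 0, 0; 0, 0, 1; 0, 0, 0]

/-- The pair `(A_s, B_s)` defined by `A_0 = [[1,1],[1,0]]`, `B_0 = [[0,0],[0,1]]`,
`A_s = D ⊗ A_{s-1} + E ⊗ B_{s-1}`, and `B_s = E ⊗ A_{s-1} + D ⊗ B_{s-1}`, where
`⊗` is the Kronecker product. -/
noncomputable def ABmat : ∀ s, Matrix (Idx s) (Idx s) ℝ × Matrix (Idx s) (Idx s) ℝ
  | 0 => (!![1, 1; 1, 0], !![0, 0; 0, 1])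
  | s + 1 => (Dm ⊗ₖ (ABmat s).1 + Em ⊗ₖ (ABmat s).2,
              Em ⊗ₖ (ABmat s).1 + Dm ⊗ₖ (ABmat s).2)

/-!
Row `p = (U, Z)` of `A_s` (resp. `B_s`) is the `0/1` indicator of those atoms of `μ` on which
the product of the variables in `Z` equals `1` (resp. `-1`) and every source in `U` abstains;
`A_s μ = r` and `B_s μ = r^B` then follow by additivity of `ℙ` over the atoms. The indicator
description is proved by induction on `s`: a new source with tag `c` and value `c'` multiplies
that product by `c'` when it lies in `Z` and forces `c' = 0` when it lies in `U`, and the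
entries of `D` and `E` record exactly this, `E` accounting for the sign flip at `c' = -1`.
-/

lemma tag_succ_castSucc (s : ℕ) (c : Fin 3) (q : Idx s) (i : Fin s) :
    tag (s + 1) (c, q) i.castSucc = tag s q i := by
  simp only [tag, Fin.val_castSucc, i.isLt, dif_pos, Fin.eta]

lemma tag_succ_last (s : ℕ) (c : Fin 3) (q : Idx s) :
    tag (s + 1) (c, q) (Fin.last s) = c := by
  simp only [tag, Fin.val_last, lt_irrefl, dif_neg, not_false_iff]

lemma eps_tag_injective (s : ℕ) : Function.Injective fun p : Idx s => (eps s p, tag s p) := by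
  induction s with
  | zero => exact fun p p' h => congrArg Prod.fst h
  | succ s ih =>
    rintro ⟨c, q⟩ ⟨c', q'⟩ h
    simp only [Prod.mk.injEq, funext_iff] at h
    obtain ⟨heps, htag⟩ := h
    have hc : c = c' := by simpa only [tag_succ_last] using htag (Fin.last s)
    have hq : q = q' := ih (Prod.ext heps (funext fun i => by
      simpa only [tag_succ_castSucc] using htag i.castSucc))
    rw [hc, hq]

lemma exists_eps_tag_eq (s : ℕ) (e : Fin 2) (t : Fin s → Fin 3) :
    ∃ p : Idx s, eps s p = e ∧ tag s p = t := by
  induction s with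
  | zero => exact ⟨e, rfl, funext fun i => i.elim0⟩
  | succ s ih =>
    obtain ⟨q, hq, hqt⟩ := ih fun i => t i.castSucc
    refine ⟨(t (Fin.last s), q), hq, funext fun i => ?_⟩
    induction i using Fin.lastCases with
    | last => exact tag_succ_last s _ q
    | cast i => rw [tag_succ_castSucc, hqt]

lemma yval_injective : Function.Injective yval := by
  intro a b h
  fin_cases a <;> fin_cases b <;> first | rfl | norm_num [yval] at h

lemma cval_injective : Function.Injective cval := by
  intro a b h
  fin_cases a <;> fin_cases b <;> first | rfl | norm_num [cval] at h

lemma exists_yval_eq {y : ℝ} (hy : y = 1 ∨ y = -1) : ∃ e, yval e = y := by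
  rcases hy with rfl | rfl
  exacts [⟨0, rfl⟩, ⟨1, rfl⟩]

lemma exists_cval_eq {x : ℝ} (hx : x = 1 ∨ x = 0 ∨ x = -1) : ∃ c, cval c = x := by
  rcases hx with rfl | rfl | rfl
  exacts [⟨0, rfl⟩, ⟨1, rfl⟩, ⟨2, rfl⟩]

/-- The values of `(Y, λ_1, …, λ_s)` on the atom of `μ` with index `p`. -/
def outcome (s : ℕ) (p : Idx s) : ℝ × (Fin s → ℝ) :=
  (yval (eps s p), fun i => cval (tag s p i))

lemma outcome_injective (s : ℕ) : Function.Injective (outcome s) := by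
  intro p p' h
  simp only [outcome, Prod.mk.injEq, funext_iff] at h
  exact eps_tag_injective s (Prod.ext (yval_injective h.1)
    (funext fun i => cval_injective (h.2 i)))

lemma exists_outcome_eq (s : ℕ) {o : ℝ × (Fin s → ℝ)} (hy : o.1 = 1 ∨ o.1 = -1)
    (hx : ∀ i, o.2 i = 1 ∨ o.2 i = 0 ∨ o.2 i = -1) : ∃ p, outcome s p = o := by
  obtain ⟨e, he⟩ := exists_yval_eq hy
  choose t ht using fun i => exists_cval_eq (hx i)
  obtain ⟨p, rfl, rfl⟩ := exists_eps_tag_eq s e t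
  exact ⟨p, Prod.ext he (funext ht)⟩

/-- The product of the variables that `p` puts in `Z`, at the values `o` of `(Y, λ)`. -/
def zProd (s : ℕ) (p : Idx s) (o : ℝ × (Fin s → ℝ)) : ℝ :=
  (if eps s p = 1 then o.1 else 1) * ∏ i ∈ univ.filter (fun i => tag s p i = 1), o.2 i

def rowSet (s : ℕ) (p : Idx s) (t : ℝ) : Set (ℝ × (Fin s → ℝ)) :=
  {o | zProd s p o = t ∧ ∀ i, tag s p i = 2 → o.2 i = 0}

lemma zProd_eq_one (s : ℕ) {p : Idx s} (hp : ¬(eps s p = 1 ∨ ∃ i, tag s p i = 1))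
    (o : ℝ × (Fin s → ℝ)) : zProd s p o = 1 := by
  rw [not_or, not_exists] at hp
  rw [zProd, if_neg hp.1, filter_false_of_mem fun i _ => hp.2 i, prod_empty, one_mul]

lemma zProd_succ_outcome (s : ℕ) (c c' : Fin 3) (q q' : Idx s) :
    zProd (s + 1) (c, q) (outcome (s + 1) (c', q')) =
      zProd s q (outcome s q') * (if c = 1 then cval c' else 1) := by
  simp only [zProd, outcome, prod_filter, Fin.prod_univ_castSucc, tag_succ_castSucc,
    tag_succ_last, mul_assoc]
  rfl

lemma mem_rowSet_succ_outcome (s : ℕ) (c c' : Fin 3) (q q' : Idx s) (t : ℝ) :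
    outcome (s + 1) (c', q') ∈ rowSet (s + 1) (c, q) t ↔
      (zProd s q (outcome s q') * (if c = 1 then cval c' else 1) = t ∧
        ∀ i, tag s q i = 2 → (outcome s q').2 i = 0) ∧ (c = 2 → cval c' = 0) := by
  simp only [rowSet, Set.mem_ofPred_eq, zProd_succ_outcome, Fin.forall_fin_succ', and_assoc]
  simp only [outcome, tag_succ_castSucc, tag_succ_last]

lemma rowSet_neg_one_eq_empty (s : ℕ) {p : Idx s}
    (hp : ¬(eps s p = 1 ∨ ∃ i, tag s p i = 1)) : rowSet s p (-1) = ∅ := by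
  ext o
  norm_num [rowSet, zProd_eq_one s hp]

lemma Dm_mul_ite_add_Em_mul_ite {t t' : ℝ} (ht : t ≠ 0) (ht' : t' = -t) (c c' : Fin 3)
    (v : ℝ) (P : Prop) [Decidable P] :
    Dm c c' * (if v = t ∧ P then 1 else 0) + Em c c' * (if v = t' ∧ P then 1 else 0) =
      if (v * (if c = 1 then cval c' else 1) = t ∧ P) ∧ (c = 2 → cval c' = 0) then 1
      else 0 := by
  subst ht'
  fin_cases c <;> fin_cases c' <;> simp [Dm, Em, cval, neg_eq_iff_eq_neg, ht.symm]

noncomputable instance (s : ℕ) (p : Idx s) (t : ℝ) : DecidablePred (· ∈ rowSet s p t) :=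
  fun _ => inferInstanceAs (Decidable (_ ∧ _))

lemma ABmat_apply (s : ℕ) (p p' : Idx s) :
    (ABmat s).1 p p' = (if outcome s p' ∈ rowSet s p 1 then 1 else 0) ∧
      (ABmat s).2 p p' = (if outcome s p' ∈ rowSet s p (-1) then 1 else 0) := by
  induction s with
  | zero =>
    fin_cases p <;> fin_cases p' <;>
      norm_num [ABmat, rowSet, zProd, outcome, eps, yval]
  | succ s ih =>
    obtain ⟨c, q⟩ := p
    obtain ⟨c', q'⟩ := p'
    obtain ⟨hA, hB⟩ := ih q q'
    have hA' : (ABmat (s + 1)).1 (c, q) (c', q') =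
        Dm c c' * (ABmat s).1 q q' + Em c c' * (ABmat s).2 q q' := rfl
    have hB' : (ABmat (s + 1)).2 (c, q) (c', q') =
        Dm c c' * (ABmat s).2 q q' + Em c c' * (ABmat s).1 q q' := add_comm _ _
    rw [hA', hB', hA, hB]
    simp only [mem_rowSet_succ_outcome]
    simp only [rowSet, Set.mem_ofPred_eq]
    constructor
    · exact Dm_mul_ite_add_Em_mul_ite one_ne_zero rfl c c' _ _
    · exact Dm_mul_ite_add_Em_mul_ite (neg_ne_zero.2 one_ne_zero) (neg_neg 1).symm c c' _ _

section FiniteRange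

variable {ι κ α Ω : Type*} [Fintype ι] [MeasurableSpace Ω] [MeasurableSpace α]
  [MeasurableSingletonClass α] {m : Measure Ω} [IsFiniteMeasure m] {X : Ω → α} {v : ι → α}

lemma measureReal_preimage_eq_sum (hX : Measurable X) (hv : Function.Injective v)
    (hrange : ∀ ω, X ω ∈ Set.range v) (S : Set α) [DecidablePred (· ∈ S)] :
    m.real (X ⁻¹' S) = ∑ i with v i ∈ S, m.real (X ⁻¹' {v i}) := by
  classical
  have hS : X ⁻¹' S = X ⁻¹' ↑((univ.filter (v · ∈ S)).image v) := by
    ext ω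
    obtain ⟨i, hi⟩ := hrange ω
    simp [← hi, hv.eq_iff]
  rw [hS, ← sum_measureReal_preimage_singleton _ fun _ _ => hX (measurableSet_singleton _),
    sum_image fun _ _ _ _ h => hv h]

lemma mulVec_eq_measureReal_preimage (hX : Measurable X) (hv : Function.Injective v)
    (hrange : ∀ ω, X ω ∈ Set.range v) (S : κ → Set α) [∀ k, DecidablePred (· ∈ S k)]
    (M : Matrix κ ι ℝ) (hM : ∀ k i, M k i = if v i ∈ S k then 1 else 0) :
    M *ᵥ (fun i => m.real (X ⁻¹' {v i})) = fun k => m.real (X ⁻¹' S k) := by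
  ext k
  simp only [mulVec, dotProduct, hM, boole_mul, ← sum_filter]
  exact (measureReal_preimage_eq_sum hX hv hrange (S k)).symm

end FiniteRange

/-- A tag of `0` means absent, `1` membership in `Z`, `2` membership in `U`. -/
theorem clique_recursive_linear_system {Ω : Type*} [MeasureSpace Ω]
    [IsProbabilityMeasure (ℙ : Measure Ω)] (s : ℕ)
    (Y : Ω → ℝ) (l : Fin s → Ω → ℝ)
    (hY : Measurable Y) (hl : ∀ i, Measurable (l i))
    (hYval : ∀ ω, Y ω = 1 ∨ Y ω = -1)
    (hlval : ∀ i ω, l i ω = 1 ∨ l i ω = 0 ∨ l i ω = -1)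
    (μ r rB : Idx s → ℝ)
    (hμ : ∀ p, μ p = ((ℙ : Measure Ω)
      {ω | Y ω = yval (eps s p) ∧ ∀ i, l i ω = cval (tag s p i)}).toReal)
    (hr : ∀ p, r p = ((ℙ : Measure Ω)
      {ω | (if eps s p = 1 then Y ω else 1) *
              ∏ i ∈ univ.filter (fun i => tag s p i = 1), l i ω = 1 ∧
            ∀ i, tag s p i = 2 → l i ω = 0}).toReal)
    (hrB : ∀ p, rB p =
      if eps s p = 1 ∨ ∃ i, tag s p i = 1 then
        ((ℙ : Measure Ω)
          {ω | (if eps s p = 1 then Y ω else 1) *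
                  ∏ i ∈ univ.filter (fun i => tag s p i = 1), l i ω = -1 ∧
                ∀ i, tag s p i = 2 → l i ω = 0}).toReal
      else 0) :
    (ABmat s).1.mulVec μ = r ∧ (ABmat s).2.mulVec μ = rB := by
  set X : Ω → ℝ × (Fin s → ℝ) := fun ω => (Y ω, fun i => l i ω)
  have hX : Measurable X := hY.prodMk (measurable_pi_lambda _ hl)
  have hrange (ω : Ω) : X ω ∈ Set.range (outcome s) :=
    exists_outcome_eq s (hYval ω) (hlval · ω)
  have hμX : μ = fun p => (ℙ : Measure Ω).real (X ⁻¹' {outcome s p}) := by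
    ext p
    rw [hμ, measureReal_def]
    congr 2
    ext ω
    simp [X, outcome, Prod.ext_iff, funext_iff]
  have hrX : r = fun p => (ℙ : Measure Ω).real (X ⁻¹' rowSet s p 1) := funext hr
  have hrBX : rB = fun p => (ℙ : Measure Ω).real (X ⁻¹' rowSet s p (-1)) := by
    ext p
    by_cases hZ : eps s p = 1 ∨ ∃ i, tag s p i = 1
    · rw [hrB p, if_pos hZ]
      rfl
    · rw [hrB p, if_neg hZ, rowSet_neg_one_eq_empty s hZ, Set.preimage_empty, measureReal_empty]
  rw [hμX, hrX, hrBX]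
  exact ⟨mulVec_eq_measureReal_preimage hX (outcome_injective s) hrange _ _
      fun p p' => (ABmat_apply s p p').1,
    mulVec_eq_measureReal_preimage hX (outcome_injective s) hrange _ _
      fun p p' => (ABmat_apply s p p').2⟩
end

section
/- Let 0 < a_min ≤ 1 and let M_12, M_13, M_23, M̂_12, M̂_13, M̂_23 be real numbers whose absolute values all lie in the interval [a_min^2, 1]. Define |a| = sqrt(|M_12| * |M_13| / |M_23|) and |â| = sqrt(|M̂_12| * |M̂_13| / |M̂_23|), and assume |a| ≥ a_min and |â| ≥ a_min. Then, writing Δ_jk = M̂_jk − M_jk, one has (|â| − |a|)^2 ≤ (1/(4 a_min^2)) * ( |Δ_23|/a_min^4 + |Δ_13|/a_min^2 + |Δ_12|/a_min^2 )^2 ≤ (1/(4 a_min^2)) * (1/a_min^8 + 2/a_min^4) * (Δ_12^2 + Δ_13^2 + Δ_23^2). -/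
/-!
Since `â² - a² = (â - a)(â + a)` and `â + a ≥ 2 a_min`, it suffices to bound the change of the
ratio `|M₁₂| |M₁₃| / |M₂₃|`. Changing one factor at a time, each step costs `|Δ_jk|` times a
bound on the remaining factors (`1 / a_min²` for the numerator entries, `1 / a_min⁴` for the
denominator). The second inequality is Cauchy–Schwarz for the weights `(a_min⁻⁴, a_min⁻², a_min⁻²)`.
-/

lemma abs_mul_div_sub_mul_div_le {t p q s p' q' s' : ℝ} (ht : 0 < t) (hs : t ≤ s) (hs' : t ≤ s')
    (hp : |p| ≤ 1) (hq : |q| ≤ 1) (hq' : |q'| ≤ 1) :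
    |p' * q' / s' - p * q / s| ≤ |s' - s| / t ^ 2 + |q' - q| / t + |p' - p| / t := by
  have hs0 : 0 < s := ht.trans_le hs
  have hs0' : 0 < s' := ht.trans_le hs'
  have hsplit : p' * q' / s' - p * q / s =
      (s - s') * (p * q / (s' * s)) + (q' - q) * (p / s') + (p' - p) * (q' / s') := by
    field_simp; ring
  have hpq : |p * q / (s' * s)| ≤ 1 / t ^ 2 := by
    rw [abs_div, abs_mul, abs_of_pos (mul_pos hs0' hs0), sq]
    gcongr
    exact (mul_le_mul hp hq (abs_nonneg _) zero_le_one).trans_eq (one_mul 1)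
  have hp_s : |p / s'| ≤ 1 / t := by
    rw [abs_div, abs_of_pos hs0']; gcongr
  have hq_s : |q' / s'| ≤ 1 / t := by
    rw [abs_div, abs_of_pos hs0']; gcongr
  rw [hsplit, abs_sub_comm s' s]
  calc _ ≤ |(s - s') * (p * q / (s' * s))| + |(q' - q) * (p / s')| + |(p' - p) * (q' / s')| :=
        abs_add_three _ _ _
    _ ≤ |s - s'| * (1 / t ^ 2) + |q' - q| * (1 / t) + |p' - p| * (1 / t) := by
        simp only [abs_mul]; gcongr
    _ = _ := by ring

lemma sq_sub_le_one_div_mul_sq_sub_sq {a b c : ℝ} (hc : 0 < c) (ha : c ≤ a) (hb : c ≤ b) :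
    (a - b) ^ 2 ≤ 1 / (4 * c ^ 2) * (a ^ 2 - b ^ 2) ^ 2 := by
  rw [one_div_mul_eq_div, le_div_iff₀ (by positivity)]
  have hsum : 2 * c ≤ a + b := by linarith
  calc (a - b) ^ 2 * (4 * c ^ 2) = (a - b) ^ 2 * (2 * c) ^ 2 := by ring
    _ ≤ (a - b) ^ 2 * (a + b) ^ 2 := by gcongr
    _ = (a ^ 2 - b ^ 2) ^ 2 := by ring

lemma sq_mul_add_mul_add_mul_le (a b c x y z : ℝ) :
    (a * x + b * y + c * z) ^ 2 ≤ (a ^ 2 + b ^ 2 + c ^ 2) * (x ^ 2 + y ^ 2 + z ^ 2) := by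
  simpa [Fin.sum_univ_three] using
    Finset.sum_mul_sq_le_sq_mul_sq Finset.univ ![a, b, c] ![x, y, z]

theorem triplet_perturbation_bound_general (amin : ℝ) (h0 : 0 < amin)
    (M12 M13 M23 M12h M13h M23h : ℝ)
    (hM12 : |M12| ∈ Set.Icc (amin ^ 2) 1) (hM13 : |M13| ∈ Set.Icc (amin ^ 2) 1)
    (hM23 : |M23| ∈ Set.Icc (amin ^ 2) 1)
    (hM13h : |M13h| ∈ Set.Icc (amin ^ 2) 1) (hM23h : |M23h| ∈ Set.Icc (amin ^ 2) 1)
    (a ah : ℝ)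
    (ha : a = Real.sqrt (|M12| * |M13| / |M23|))
    (hah : ah = Real.sqrt (|M12h| * |M13h| / |M23h|))
    (ha_min : amin ≤ a) (hah_min : amin ≤ ah)
    (Δ12 Δ13 Δ23 : ℝ)
    (hΔ12 : Δ12 = M12h - M12) (hΔ13 : Δ13 = M13h - M13) (hΔ23 : Δ23 = M23h - M23) :
    (ah - a) ^ 2 ≤
      1 / (4 * amin ^ 2) *
        (|Δ23| / amin ^ 4 + |Δ13| / amin ^ 2 + |Δ12| / amin ^ 2) ^ 2 ∧
    1 / (4 * amin ^ 2) *
        (|Δ23| / amin ^ 4 + |Δ13| / amin ^ 2 + |Δ12| / amin ^ 2) ^ 2 ≤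
      1 / (4 * amin ^ 2) * (1 / amin ^ 8 + 2 / amin ^ 4) *
        (Δ12 ^ 2 + Δ13 ^ 2 + Δ23 ^ 2) := by
  have hsq_diff : |ah ^ 2 - a ^ 2| ≤ |Δ23| / amin ^ 4 + |Δ13| / amin ^ 2 + |Δ12| / amin ^ 2 := by
    rw [ha, hah, Real.sq_sqrt (by positivity), Real.sq_sqrt (by positivity),
      show amin ^ 4 = (amin ^ 2) ^ 2 by ring]
    calc _ ≤ |(|M23h| - |M23|)| / (amin ^ 2) ^ 2 + |(|M13h| - |M13|)| / amin ^ 2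
          + |(|M12h| - |M12|)| / amin ^ 2 :=
          abs_mul_div_sub_mul_div_le (by positivity) hM23.1 hM23h.1 (by simpa using hM12.2)
            (by simpa using hM13.2) (by simpa using hM13h.2)
      _ ≤ _ := by
          subst hΔ12 hΔ13 hΔ23
          gcongr ?_ / _ + ?_ / _ + ?_ / _ <;> exact abs_abs_sub_abs_le_abs_sub _ _
  constructor
  · calc (ah - a) ^ 2 ≤ 1 / (4 * amin ^ 2) * (ah ^ 2 - a ^ 2) ^ 2 :=
          sq_sub_le_one_div_mul_sq_sub_sq h0 hah_min ha_min
      _ ≤ _ := by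
          rw [← sq_abs (ah ^ 2 - a ^ 2)]
          gcongr
  · rw [mul_assoc]
    gcongr
    calc _ = (1 / amin ^ 4 * |Δ23| + 1 / amin ^ 2 * |Δ13| + 1 / amin ^ 2 * |Δ12|) ^ 2 := by ring
      _ ≤ ((1 / amin ^ 4) ^ 2 + (1 / amin ^ 2) ^ 2 + (1 / amin ^ 2) ^ 2) *
            (|Δ23| ^ 2 + |Δ13| ^ 2 + |Δ12| ^ 2) :=
          sq_mul_add_mul_add_mul_le _ _ _ _ _ _
      _ = _ := by simp only [sq_abs]; ring

/-- Deterministic perturbation bound for the triplet method: the error in the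
recovered accuracy magnitude is controlled by the errors in the pairwise second
moments. -/
theorem triplet_perturbation_bound (amin : ℝ) (h0 : 0 < amin) (h1 : amin ≤ 1)
    (M12 M13 M23 M12h M13h M23h : ℝ)
    (hM12 : |M12| ∈ Set.Icc (amin ^ 2) 1) (hM13 : |M13| ∈ Set.Icc (amin ^ 2) 1)
    (hM23 : |M23| ∈ Set.Icc (amin ^ 2) 1) (hM12h : |M12h| ∈ Set.Icc (amin ^ 2) 1)
    (hM13h : |M13h| ∈ Set.Icc (amin ^ 2) 1) (hM23h : |M23h| ∈ Set.Icc (amin ^ 2) 1)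
    (a ah : ℝ)
    (ha : a = Real.sqrt (|M12| * |M13| / |M23|))
    (hah : ah = Real.sqrt (|M12h| * |M13h| / |M23h|))
    (ha_min : amin ≤ a) (hah_min : amin ≤ ah)
    (Δ12 Δ13 Δ23 : ℝ)
    (hΔ12 : Δ12 = M12h - M12) (hΔ13 : Δ13 = M13h - M13) (hΔ23 : Δ23 = M23h - M23) :
    (ah - a) ^ 2 ≤
      1 / (4 * amin ^ 2) *
        (|Δ23| / amin ^ 4 + |Δ13| / amin ^ 2 + |Δ12| / amin ^ 2) ^ 2 ∧
    1 / (4 * amin ^ 2) *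
        (|Δ23| / amin ^ 4 + |Δ13| / amin ^ 2 + |Δ12| / amin ^ 2) ^ 2 ≤
      1 / (4 * amin ^ 2) * (1 / amin ^ 8 + 2 / amin ^ 4) *
        (Δ12 ^ 2 + Δ13 ^ 2 + Δ23 ^ 2) :=
  triplet_perturbation_bound_general amin h0 M12 M13 M23 M12h M13h M23h hM12 hM13 hM23 hM13h hM23h a
    ah ha hah ha_min hah_min Δ12 Δ13 Δ23 hΔ12 hΔ13 hΔ23
end

section
/- Fix m ≥ 1, real numbers θ_Y and δ, and v ∈ {−1, 1}^m. Let (Y, λ) ∈ {−1,1} × {−1,1}^m be distributed according to P_v(y, λ) = (1/z_v) exp( θ_Y y + δ Σ_{j=1}^m v_j λ_j y ), where z_v is the normalizing constant. Then for every i ∈ {1, …, m}, E_{P_v}[λ_i Y] = v_i * ( e^δ / cosh(δ) − 1 ). -/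
open Finset

/-- Spin value of a boolean: `true ↦ 1`, `false ↦ -1`. -/
def sgn (b : Bool) : ℝ := if b then 1 else -1

/-- Unnormalized weight of the binary Ising distribution `P_v` on
`{-1,1} × {-1,1}^m` with canonical parameters `θ_Y` and `δ v`. -/
noncomputable def isingWeight (m : ℕ) (θY δ : ℝ) (v : Fin m → ℝ)
    (y : Bool) (lam : Fin m → Bool) : ℝ :=
  Real.exp (θY * sgn y + δ * ∑ j, v j * sgn (lam j) * sgn y)

/-- Partition function of `P_v`. -/
noncomputable def isingZ (m : ℕ) (θY δ : ℝ) (v : Fin m → ℝ) : ℝ :=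
  ∑ y : Bool, ∑ lam : Fin m → Bool, isingWeight m θY δ v y lam

/-!
Given `Y = y`, the weight factorizes over the sources, so summing out `λ` leaves one spin:
the conditional mean of `λ_i Y` is `y · tanh (δ v_i y) = tanh (δ v_i)` for both values of `y`.
Hence `E[λ_i Y] = tanh (δ v_i) = v_i tanh δ`, and `tanh δ = e^δ / cosh δ − 1`.
-/

open Real

theorem Fintype.sum_apply_mul_prod_eq {ι α R : Type*} [Fintype ι] [DecidableEq ι] [Fintype α]
    [CommSemiring R] (f : ι → α → R) (g : α → R) (i : ι) :
    ∑ x : ι → α, g (x i) * ∏ j, f j (x j) =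
      (∑ a, g a * f i a) * ∏ j ∈ {i}ᶜ, ∑ a, f j a := by
  set f' := Function.update f i fun a ↦ g a * f i a
  have hf' (x : ι → α) : g (x i) * ∏ j, f j (x j) = ∏ j, f' j (x j) := by
    rw [Fintype.prod_eq_mul_prod_compl i, Fintype.prod_eq_mul_prod_compl i, ← mul_assoc]
    refine congrArg₂ _ (by simp [f']) (Finset.prod_congr rfl fun j hj ↦ ?_)
    simp [f', Function.update_of_ne (by simpa using hj : j ≠ i)]
  simp_rw [hf', ← Fintype.prod_sum, Fintype.prod_eq_mul_prod_compl i]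
  refine congrArg₂ _ (by simp [f']) (Finset.prod_congr rfl fun j hj ↦ ?_)
  simp [f', Function.update_of_ne (by simpa using hj : j ≠ i)]

lemma sum_bool_exp_mul_sgn (c : ℝ) : ∑ b : Bool, exp (c * sgn b) = 2 * cosh c := by
  simp only [Fintype.sum_bool, sgn, if_true, Bool.false_eq_true, if_false, mul_one, mul_neg,
    cosh_eq]
  ring

lemma sum_bool_sgn_mul_exp_mul_sgn (c : ℝ) :
    ∑ b : Bool, sgn b * exp (c * sgn b) = 2 * sinh c := by
  simp only [Fintype.sum_bool, sgn, if_true, Bool.false_eq_true, if_false, mul_one, mul_neg,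
    one_mul, neg_mul, sinh_eq]
  ring

lemma cosh_mul_sgn (c : ℝ) (b : Bool) : cosh (c * sgn b) = cosh c := by
  cases b <;> simp [sgn]

lemma sgn_mul_sinh_mul_sgn (c : ℝ) (b : Bool) : sgn b * sinh (c * sgn b) = sinh c := by
  cases b <;> simp [sgn]

lemma tanh_eq_exp_div_cosh_sub_one (x : ℝ) : tanh x = exp x / cosh x - 1 := by
  rw [tanh_eq_sinh_div_cosh, ← cosh_add_sinh, add_div, div_self (cosh_pos x).ne']
  ring

lemma isingWeight_eq_mul_prod (m : ℕ) (θY δ : ℝ) (v : Fin m → ℝ) (y : Bool)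
    (lam : Fin m → Bool) :
    isingWeight m θY δ v y lam =
      exp (θY * sgn y) * ∏ j, exp (δ * v j * sgn y * sgn (lam j)) := by
  rw [isingWeight, exp_add, ← exp_sum, mul_sum]
  congr 3 with j
  ring

lemma isingZ_pos (m : ℕ) (θY δ : ℝ) (v : Fin m → ℝ) : 0 < isingZ m θY δ v := by
  unfold isingZ isingWeight
  positivity

lemma sum_sgn_mul_sgn_mul_isingWeight (m : ℕ) (θY δ : ℝ) (v : Fin m → ℝ) (i : Fin m)
    (y : Bool) :
    ∑ lam : Fin m → Bool, sgn (lam i) * sgn y * isingWeight m θY δ v y lam =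
      tanh (δ * v i) * ∑ lam : Fin m → Bool, isingWeight m θY δ v y lam := by
  set f : Fin m → Bool → ℝ := fun j b ↦ exp (δ * v j * sgn y * sgn b)
  set P := ∏ j ∈ {i}ᶜ, ∑ b, f j b
  have hnum : ∑ lam : Fin m → Bool, sgn (lam i) * ∏ j, f j (lam j) =
      2 * sinh (δ * v i * sgn y) * P := by
    rw [Fintype.sum_apply_mul_prod_eq f sgn i, sum_bool_sgn_mul_exp_mul_sgn]
  have hden : ∑ lam : Fin m → Bool, ∏ j, f j (lam j) = 2 * cosh (δ * v i * sgn y) * P := by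
    rw [← sum_bool_exp_mul_sgn]
    simpa only [one_mul] using Fintype.sum_apply_mul_prod_eq f (fun _ ↦ 1) i
  simp_rw [isingWeight_eq_mul_prod]
  calc ∑ lam : Fin m → Bool, sgn (lam i) * sgn y * (exp (θY * sgn y) * ∏ j, f j (lam j))
      = sgn y * exp (θY * sgn y) * ∑ lam : Fin m → Bool, sgn (lam i) * ∏ j, f j (lam j) := by
        rw [mul_sum]; congr 1 with lam; ring
    _ = exp (θY * sgn y) * (2 * (sgn y * sinh (δ * v i * sgn y)) * P) := by rw [hnum]; ring
    _ = tanh (δ * v i) * (exp (θY * sgn y) * (2 * cosh (δ * v i * sgn y) * P)) := by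
        rw [sgn_mul_sinh_mul_sgn, cosh_mul_sgn, tanh_eq_sinh_div_cosh]
        field_simp [(cosh_pos (δ * v i)).ne']
    _ = _ := by rw [← hden, mul_sum]

theorem ising_accuracy_expectation_general (m : ℕ) (θY δ : ℝ)
    (v : Fin m → ℝ) (hv : ∀ j, v j = 1 ∨ v j = -1) :
    ∀ i : Fin m,
      (∑ y : Bool, ∑ lam : Fin m → Bool,
          sgn (lam i) * sgn y * isingWeight m θY δ v y lam) / isingZ m θY δ v =
        v i * (Real.exp δ / Real.cosh δ - 1) := by
  intro i
  simp_rw [sum_sgn_mul_sgn_mul_isingWeight, ← mul_sum]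
  rw [← isingZ, mul_div_cancel_right₀ _ (isingZ_pos m θY δ v).ne',
    ← tanh_eq_exp_div_cosh_sub_one]
  rcases hv i with h | h <;> simp [h]

/-- In the binary Ising family `P_v(y, λ) ∝ exp(θ_Y y + δ ∑_j v_j λ_j y)` with
`v ∈ {-1,1}^m`, the expectation of `λ_i Y` equals `v_i (e^δ / cosh δ − 1)`. -/
theorem ising_accuracy_expectation (m : ℕ) (hm : 1 ≤ m) (θY δ : ℝ)
    (v : Fin m → ℝ) (hv : ∀ j, v j = 1 ∨ v j = -1) :
    ∀ i : Fin m,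
      (∑ y : Bool, ∑ lam : Fin m → Bool,
          sgn (lam i) * sgn y * isingWeight m θY δ v y lam) / isingZ m θY δ v =
        v i * (Real.exp δ / Real.cosh δ - 1) :=
  ising_accuracy_expectation_general m θY δ v hv
end

section
/- Let S be a nonempty finite set and φ : S → ℝ^m a map with |φ(s)_j| ≤ 1 for all s ∈ S and j ∈ {1,…,m}. For θ ∈ ℝ^m define the probability mass function P_θ(s) = exp(⟨θ, φ(s)⟩) / Σ_{s'∈S} exp(⟨θ, φ(s')⟩). Then for all θ, θ' ∈ ℝ^m, KL(P_θ ‖ P_{θ'}) ≤ 2 √m ‖θ − θ'‖_2. -/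
/-!
With `A(θ) = log ∑ exp ⟨θ, φ(s)⟩` the log-partition function,
`log (P_θ(s) / P_θ'(s)) = ⟨θ - θ', φ(s)⟩ - (A(θ) - A(θ'))`.
By Cauchy–Schwarz and `|φ(s)_j| ≤ 1`, the energy difference `⟨θ - θ', φ(s)⟩` is bounded by
`c = √m ‖θ - θ'‖₂` uniformly in `s`; since log-sum-exp is 1-Lipschitz for the sup norm,
`A(θ') - A(θ) ≤ c` as well. Averaging over `P_θ` gives `KL(P_θ ‖ P_θ') ≤ 2c`.
-/

open Finset

/-- Kullback–Leibler divergence between probability mass functions on a finite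
type, with value `∞` when absolute continuity fails. -/
noncomputable def klFin {α : Type*} [Fintype α] (P Q : α → ℝ) : ENNReal :=
  if ∀ a, 0 < P a → 0 < Q a then
    ENNReal.ofReal (∑ a, if 0 < P a then P a * Real.log (P a / Q a) else 0)
  else ⊤

/-- The exponential-family (Gibbs) pmf with sufficient statistics `φ` and canonical
parameter `θ`. -/
noncomputable def gibbs {S : Type*} [Fintype S] {m : ℕ}
    (φ : S → Fin m → ℝ) (θ : Fin m → ℝ) (s : S) : ℝ :=
  Real.exp (∑ j, θ j * φ s j) / ∑ s', Real.exp (∑ j, θ j * φ s' j)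

open Real

theorem abs_sum_mul_le_sqrt_card_mul_sqrt_sum_sq {ι : Type*} [Fintype ι] (x y : ι → ℝ)
    (hy : ∀ i, |y i| ≤ 1) :
    |∑ i, x i * y i| ≤ √(Fintype.card ι) * √(∑ i, x i ^ 2) := by
  have hy_sq : ∑ i, y i ^ 2 ≤ Fintype.card ι := by
    calc ∑ i, y i ^ 2 ≤ ∑ _i : ι, (1 : ℝ) :=
          sum_le_sum fun i _ ↦ (sq_le_one_iff_abs_le_one _).2 (hy i)
      _ = Fintype.card ι := by simp
  calc |∑ i, x i * y i| ≤ √((∑ i, x i ^ 2) * ∑ i, y i ^ 2) :=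
        abs_le_sqrt (sum_mul_sq_le_sq_mul_sq _ _ _)
    _ ≤ √((∑ i, x i ^ 2) * Fintype.card ι) := by gcongr
    _ = √(Fintype.card ι) * √(∑ i, x i ^ 2) := by
        rw [sqrt_mul (by positivity), mul_comm]

theorem klFin_of_pos {α : Type*} [Fintype α] {P Q : α → ℝ} (hP : ∀ a, 0 < P a)
    (hQ : ∀ a, 0 < Q a) :
    klFin P Q = ENNReal.ofReal (∑ a, P a * log (P a / Q a)) := by
  rw [klFin, if_pos fun a _ ↦ hQ a]
  simp only [hP, if_true]

noncomputable def logSumExp {S : Type*} [Fintype S] (f : S → ℝ) : ℝ :=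
  log (∑ s, exp (f s))

noncomputable def softmax {S : Type*} [Fintype S] (f : S → ℝ) (s : S) : ℝ :=
  exp (f s) / ∑ s', exp (f s')

section Softmax

variable {S : Type*} [Fintype S]

theorem sum_exp_pos (f : S → ℝ) (s : S) : 0 < ∑ s', exp (f s') :=
  sum_pos' (fun _ _ ↦ (exp_pos _).le) ⟨s, mem_univ s, exp_pos _⟩

theorem softmax_pos (f : S → ℝ) (s : S) : 0 < softmax f s :=
  div_pos (exp_pos _) (sum_exp_pos f s)

theorem log_softmax (f : S → ℝ) (s : S) : log (softmax f s) = f s - logSumExp f := by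
  rw [softmax, log_div (exp_pos _).ne' (sum_exp_pos f s).ne', log_exp, logSumExp]

variable [Nonempty S]

theorem sum_softmax (f : S → ℝ) : ∑ s, softmax f s = 1 := by
  obtain ⟨s⟩ := ‹Nonempty S›
  simp only [softmax]
  rw [← sum_div, div_self (sum_exp_pos f s).ne']

theorem logSumExp_le_add_of_le_add {f g : S → ℝ} {c : ℝ} (h : ∀ s, g s ≤ f s + c) :
    logSumExp g ≤ logSumExp f + c := by
  obtain ⟨s⟩ := ‹Nonempty S›
  have hsum : ∑ s, exp (g s) ≤ exp c * ∑ s, exp (f s) := by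
    rw [mul_sum]
    exact sum_le_sum fun s _ ↦ by rw [← exp_add, add_comm]; exact exp_le_exp.2 (h s)
  calc logSumExp g ≤ log (exp c * ∑ s, exp (f s)) := log_le_log (sum_exp_pos g s) hsum
    _ = logSumExp f + c := by
        rw [log_mul (exp_pos _).ne' (sum_exp_pos f s).ne', log_exp, logSumExp, add_comm]

theorem sum_softmax_mul_log_div (f g : S → ℝ) :
    ∑ s, softmax f s * log (softmax f s / softmax g s) =
      ∑ s, softmax f s * (f s - g s) + (logSumExp g - logSumExp f) := by
  have hlog : ∀ s, log (softmax f s / softmax g s) = f s - g s + (logSumExp g - logSumExp f) :=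
    fun s ↦ by
      rw [log_div (softmax_pos f s).ne' (softmax_pos g s).ne', log_softmax, log_softmax]; ring
  simp only [hlog, mul_add, sum_add_distrib, ← sum_mul, sum_softmax, one_mul]

theorem klFin_softmax_le {f g : S → ℝ} {c : ℝ} (h : ∀ s, |f s - g s| ≤ c) :
    klFin (softmax f) (softmax g) ≤ ENNReal.ofReal (2 * c) := by
  rw [klFin_of_pos (softmax_pos f) (softmax_pos g), sum_softmax_mul_log_div]
  refine ENNReal.ofReal_le_ofReal ?_
  have h_mean : ∑ s, softmax f s * (f s - g s) ≤ c :=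
    calc ∑ s, softmax f s * (f s - g s) ≤ ∑ s, softmax f s * c :=
          sum_le_sum fun s _ ↦ mul_le_mul_of_nonneg_left (abs_le.1 (h s)).2 (softmax_pos f s).le
      _ = c := by rw [← sum_mul, sum_softmax, one_mul]
  have h_logZ : logSumExp g ≤ logSumExp f + c :=
    logSumExp_le_add_of_le_add fun s ↦ by linarith [(abs_le.1 (h s)).1]
  linarith

end Softmax

theorem gibbs_eq_softmax {S : Type*} [Fintype S] {m : ℕ} (φ : S → Fin m → ℝ) (θ : Fin m → ℝ) :
    gibbs φ θ = softmax fun s ↦ ∑ j, θ j * φ s j :=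
  rfl

/-- For an exponential family on a finite set with sufficient statistics bounded
by 1 in sup-norm, `KL(P_θ ‖ P_{θ'}) ≤ 2 √m ‖θ − θ'‖₂`. -/
theorem gibbs_KL_bound {S : Type*} [Fintype S] [Nonempty S] {m : ℕ}
    (φ : S → Fin m → ℝ) (hφ : ∀ s j, |φ s j| ≤ 1) (θ θ' : Fin m → ℝ) :
    klFin (gibbs φ θ) (gibbs φ θ') ≤
      ENNReal.ofReal (2 * Real.sqrt m * Real.sqrt (∑ j, (θ j - θ' j) ^ 2)) := by
  have h_energy : ∀ s, |∑ j, θ j * φ s j - ∑ j, θ' j * φ s j| ≤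
      √m * √(∑ j, (θ j - θ' j) ^ 2) := fun s ↦ by
    simpa only [← sum_sub_distrib, ← sub_mul, Fintype.card_fin] using
      abs_sum_mul_le_sqrt_card_mul_sqrt_sum_sq (fun j ↦ θ j - θ' j) (φ s) (hφ s)
  rw [gibbs_eq_softmax, gibbs_eq_softmax, mul_assoc]
  exact klFin_softmax_le h_energy
end

section
/- Let X and Y be nonempty finite sets, and let D and P be probability mass functions on X × Y with the same marginal d on X, i.e., Σ_y D(x, y) = Σ_y P(x, y) = d(x) for all x ∈ X. Let f : X × Y → [0, 1]. Then | Σ_{x,y} f(x,y) D(x,y) − Σ_{x,y} f(x,y) P(x,y) | ≤ sqrt( 2 · Σ_{x : d(x) > 0} d(x) · KL( D(·|x) ‖ P(·|x) ) ), where D(y|x) = D(x,y)/d(x) and P(y|x) = P(x,y)/d(x) for d(x) > 0. -/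
open Finset

/-! Since `D` and `P` share the marginal `d`, the weighted conditional divergence is the joint
divergence `KL(D ‖ P)`, and since `0 ≤ f ≤ 1` the gap is at most `‖D - P‖₁`. It remains to prove
Pinsker's inequality `‖p - q‖₁² ≤ 2 KL(p ‖ q)`. Writing `t = p / q`, it follows by Cauchy–Schwarz
from the pointwise bound `3 (t - 1)² ≤ (2t + 4) klFun t`, because the weights `(2p + 4q) / 3` sum
to `2` and `∑ q klFun (p / q) = KL(p ‖ q)`. -/

open Real InformationTheory

lemma two_mul_sub_one_le_add_one_mul_log {t : ℝ} (ht : 1 ≤ t) :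
    2 * (t - 1) ≤ (t + 1) * log t := by
  have h := le_log_one_add_of_nonneg (sub_nonneg.mpr ht)
  rw [add_sub_cancel, sub_add_eq_add_sub, div_le_iff₀ (by linarith)] at h
  linarith

lemma add_one_mul_log_le_two_mul_sub_one {t : ℝ} (ht₀ : 0 < t) (ht₁ : t ≤ 1) :
    (t + 1) * log t ≤ 2 * (t - 1) := by
  have h := two_mul_sub_one_le_add_one_mul_log (one_le_inv₀ ht₀ |>.mpr ht₁)
  rw [log_inv] at h
  have := mul_le_mul_of_nonneg_left h ht₀.le
  field_simp at this
  linarith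

lemma three_mul_sq_sub_one_le_mul_klFun {t : ℝ} (ht : 0 ≤ t) :
    3 * (t - 1) ^ 2 ≤ (2 * t + 4) * klFun t := by
  set h : ℝ → ℝ := fun s => (2 * s + 4) * klFun s - 3 * (s - 1) ^ 2
  have hcont : Continuous h := by fun_prop
  have hderiv : ∀ s ≠ 0, HasDerivAt h (4 * ((s + 1) * log s - 2 * (s - 1))) s := fun s hs =>
    ((((hasDerivAt_id s).const_mul 2).add_const 4).mul (hasDerivAt_klFun hs)
      |>.sub (((hasDerivAt_id s).sub_const 1).pow 2 |>.const_mul 3)).congr_deriv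
      (by simp only [klFun_apply, id]; ring)
  have hdiff : ∀ s ≠ 0, DifferentiableAt ℝ h s := fun s hs => (hderiv s hs).differentiableAt
  suffices 0 ≤ h t by simp only [h] at this; linarith
  have h1 : h 1 = 0 := by simp [h, klFun_one]
  rcases le_total t 1 with ht1 | ht1
  · have hanti : AntitoneOn h (Set.Icc 0 1) := by
      refine antitoneOn_of_deriv_nonpos (convex_Icc 0 1) hcont.continuousOn
        (fun s hs => (hdiff s ?_).differentiableWithinAt) fun s hs => ?_
      all_goals rw [interior_Icc] at hs
      · exact hs.1.ne'
      rw [(hderiv _ hs.1.ne').deriv]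
      nlinarith [add_one_mul_log_le_two_mul_sub_one hs.1 hs.2.le]
    exact h1 ▸ hanti ⟨ht, ht1⟩ ⟨zero_le_one, le_rfl⟩ ht1
  · have hmono : MonotoneOn h (Set.Ici 1) := by
      refine monotoneOn_of_deriv_nonneg (convex_Ici 1) hcont.continuousOn
        (fun s hs => (hdiff s ?_).differentiableWithinAt) fun s hs => ?_
      all_goals rw [interior_Ici] at hs
      · exact (zero_lt_one.trans hs).ne'
      rw [(hderiv _ (zero_lt_one.trans hs).ne').deriv]
      nlinarith [two_mul_sub_one_le_add_one_mul_log hs.le]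
    exact h1 ▸ hmono Set.self_mem_Ici ht1 ht1

lemma mul_klFun_div {p q : ℝ} (hqp : q = 0 → p = 0) :
    q * klFun (p / q) = p * log (p / q) + q - p := by
  rcases eq_or_ne q 0 with rfl | hq
  · simp [hqp rfl]
  · rw [klFun_apply]
    field_simp

lemma sq_abs_sub_le_mul_klFun_div {p q : ℝ} (hp : 0 ≤ p) (hq : 0 ≤ q) (hqp : q = 0 → p = 0) :
    |p - q| ^ 2 ≤ (2 * p + 4 * q) / 3 * (q * klFun (p / q)) := by
  rcases hq.eq_or_lt with rfl | hq
  · simp [hqp rfl]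
  have h := three_mul_sq_sub_one_le_mul_klFun (div_nonneg hp hq.le)
  have h' := mul_le_mul_of_nonneg_left h (sq_nonneg q)
  rw [sq_abs]
  calc (p - q) ^ 2 = q ^ 2 * (3 * (p / q - 1) ^ 2) / 3 := by field_simp
    _ ≤ q ^ 2 * ((2 * (p / q) + 4) * klFun (p / q)) / 3 := by gcongr
    _ = (2 * p + 4 * q) / 3 * (q * klFun (p / q)) := by field_simp

section

variable {ι : Type*} [Fintype ι] {p q : ι → ℝ}

lemma sum_mul_log_div_eq_sum_mul_klFun (hsum : ∑ i, p i = ∑ i, q i)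
    (hqp : ∀ i, q i = 0 → p i = 0) :
    ∑ i, p i * log (p i / q i) = ∑ i, q i * klFun (p i / q i) := by
  simp only [mul_klFun_div (hqp _), sum_sub_distrib, sum_add_distrib, hsum, add_sub_cancel_right]

lemma sum_mul_log_div_nonneg (hp : ∀ i, 0 ≤ p i) (hq : ∀ i, 0 ≤ q i)
    (hsum : ∑ i, p i = ∑ i, q i) (hqp : ∀ i, q i = 0 → p i = 0) :
    0 ≤ ∑ i, p i * log (p i / q i) := by
  rw [sum_mul_log_div_eq_sum_mul_klFun hsum hqp]
  exact sum_nonneg fun i _ => mul_nonneg (hq i) (klFun_nonneg (div_nonneg (hp i) (hq i)))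

lemma sq_sum_abs_sub_le_two_mul_sum_mul_log_div (hp : ∀ i, 0 ≤ p i) (hq : ∀ i, 0 ≤ q i)
    (hp₁ : ∑ i, p i = 1) (hq₁ : ∑ i, q i = 1) (hqp : ∀ i, q i = 0 → p i = 0) :
    (∑ i, |p i - q i|) ^ 2 ≤ 2 * ∑ i, p i * log (p i / q i) := by
  have hcs := sum_sq_le_sum_mul_sum_of_sq_le_mul univ
    (fun i _ => by have := hp i; have := hq i; positivity)
    (fun i _ => mul_nonneg (hq i) (klFun_nonneg (div_nonneg (hp i) (hq i))))
    (fun i _ => sq_abs_sub_le_mul_klFun_div (hp i) (hq i) (hqp i))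
  have hweight : ∑ i, (2 * p i + 4 * q i) / 3 = 2 := by
    rw [← sum_div, sum_add_distrib, ← mul_sum, ← mul_sum, hp₁, hq₁]
    norm_num
  rwa [hweight, ← sum_mul_log_div_eq_sum_mul_klFun (hp₁.trans hq₁.symm) hqp] at hcs

lemma ofReal_mul_klFin_div_eq_top {c : ℝ} {a : ι} (hp : ∀ i, 0 ≤ p i) (hc : ∑ i, p i = c)
    (hpa : 0 < p a) (hqa : q a = 0) :
    ENNReal.ofReal c * klFin (fun i => p i / c) (fun i => q i / c) = ⊤ := by
  have hc₀ : 0 < c := hc ▸ hpa.trans_le (single_le_sum (fun i _ => hp i) (mem_univ a))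
  have hkl : klFin (fun i => p i / c) (fun i => q i / c) = ⊤ :=
    if_neg fun hac => (hac a (div_pos hpa hc₀)).ne' (by simp [hqa])
  rw [hkl, ENNReal.mul_top (ENNReal.ofReal_pos.mpr hc₀).ne']

lemma ofReal_mul_klFin_div {c : ℝ} (hp : ∀ i, 0 ≤ p i) (hq : ∀ i, 0 ≤ q i)
    (hqp : ∀ i, q i = 0 → p i = 0) (hc : ∑ i, p i = c) :
    ENNReal.ofReal c * klFin (fun i => p i / c) (fun i => q i / c) =
      ENNReal.ofReal (∑ i, p i * log (p i / q i)) := by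
  rcases (hc ▸ sum_nonneg fun i _ => hp i : 0 ≤ c).eq_or_lt with rfl | hc₀
  · have hp₀ : ∀ i, p i = 0 := fun i =>
      (sum_eq_zero_iff_of_nonneg fun i _ => hp i).mp hc i (mem_univ i)
    simp [hp₀]
  have hac : ∀ i, 0 < p i / c → 0 < q i / c := fun i hi => by
    have hpi : 0 < p i := (div_pos_iff_of_pos_right hc₀).mp hi
    exact div_pos ((hq i).lt_of_ne fun h => hpi.ne' (hqp i h.symm)) hc₀
  have hterm : ∀ i, (if 0 < p i / c then p i / c * log (p i / c / (q i / c)) else 0) =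
      p i * log (p i / q i) / c := fun i => by
    split_ifs with hi
    · rw [div_div_div_cancel_right₀ hc₀.ne', div_mul_eq_mul_div]
    · have hp₀ : p i = 0 := (hp i).antisymm' (not_lt.mp fun h => hi (div_pos h hc₀))
      simp [hp₀]
  rw [klFin, if_pos hac, sum_congr rfl fun i _ => hterm i, ← sum_div,
    ← ENNReal.ofReal_mul hc₀.le, mul_div_cancel₀ _ hc₀.ne']

lemma abs_sum_mul_sub_sum_mul_le_sum_abs_sub {f : ι → ℝ} (hf : ∀ i, |f i| ≤ 1) :
    |∑ i, f i * p i - ∑ i, f i * q i| ≤ ∑ i, |p i - q i| := by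
  rw [← sum_sub_distrib]
  refine (abs_sum_le_sum_abs _ _).trans (sum_le_sum fun i _ => ?_)
  rw [← mul_sub, abs_mul]
  exact mul_le_of_le_one_left (abs_nonneg _) (hf i)

lemma abs_sum_mul_sub_sum_mul_le_sqrt (hp : ∀ i, 0 ≤ p i) (hq : ∀ i, 0 ≤ q i)
    (hp₁ : ∑ i, p i = 1) (hq₁ : ∑ i, q i = 1) (hqp : ∀ i, q i = 0 → p i = 0)
    {f : ι → ℝ} (hf : ∀ i, f i ∈ Set.Icc 0 1) :
    |∑ i, f i * p i - ∑ i, f i * q i| ≤ √(2 * ∑ i, p i * log (p i / q i)) := by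
  have hf₁ : ∀ i, |f i| ≤ 1 := fun i => abs_le.mpr ⟨by linarith [(hf i).1], (hf i).2⟩
  have hkl := sum_mul_log_div_nonneg hp hq (hp₁.trans hq₁.symm) hqp
  refine (abs_sum_mul_sub_sum_mul_le_sum_abs_sub hf₁).trans ?_
  exact (le_sqrt (by positivity) (by positivity)).mpr
    (sq_sum_abs_sub_le_two_mul_sum_mul_log_div hp hq hp₁ hq₁ hqp)

end

theorem misspecification_conditional_KL_bound_general
    {X Y : Type*} [Fintype X] [Fintype Y]
    (D P : X → Y → ℝ) (d : X → ℝ)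
    (hDnn : ∀ x y, 0 ≤ D x y) (hPnn : ∀ x y, 0 ≤ P x y)
    (hDsum : ∑ x, ∑ y, D x y = 1) (hPsum : ∑ x, ∑ y, P x y = 1)
    (hDmarg : ∀ x, ∑ y, D x y = d x) (hPmarg : ∀ x, ∑ y, P x y = d x)
    (f : X → Y → ℝ) (hf : ∀ x y, f x y ∈ Set.Icc (0 : ℝ) 1) :
    ENNReal.ofReal |(∑ x, ∑ y, f x y * D x y) - ∑ x, ∑ y, f x y * P x y| ≤
      (2 * ∑ x, ENNReal.ofReal (d x) *
          klFin (fun y => D x y / d x) (fun y => P x y / d x)) ^ (1 / 2 : ℝ) := by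
  by_cases hac : ∀ x y, P x y = 0 → D x y = 0
  · have hkl : ∀ x, 0 ≤ ∑ y, D x y * log (D x y / P x y) := fun x =>
      sum_mul_log_div_nonneg (hDnn x) (hPnn x) ((hDmarg x).trans (hPmarg x).symm) (hac x)
    have hbound := abs_sum_mul_sub_sum_mul_le_sqrt (p := fun z : X × Y => D z.1 z.2)
      (q := fun z => P z.1 z.2) (fun z => hDnn z.1 z.2) (fun z => hPnn z.1 z.2)
      (by rwa [Fintype.sum_prod_type]) (by rwa [Fintype.sum_prod_type]) (fun z => hac z.1 z.2)
      (f := fun z => f z.1 z.2) fun z => hf z.1 z.2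
    simp only [Fintype.sum_prod_type] at hbound
    rw [sum_congr rfl fun x _ => ofReal_mul_klFin_div (hDnn x) (hPnn x) (hac x) (hDmarg x),
      ← ENNReal.ofReal_sum_of_nonneg fun x _ => hkl x, ← ENNReal.ofReal_ofNat 2,
      ← ENNReal.ofReal_mul zero_le_two,
      ENNReal.ofReal_rpow_of_nonneg
        (mul_nonneg zero_le_two (sum_nonneg fun x _ => hkl x)) one_half_pos.le,
      ← sqrt_eq_rpow]
    exact ENNReal.ofReal_le_ofReal hbound
  · push Not at hac
    obtain ⟨x, y, hP, hD⟩ := hac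
    have htop := ofReal_mul_klFin_div_eq_top (hDnn x) (hDmarg x) ((hDnn x y).lt_of_ne' hD) hP
    rw [ENNReal.sum_eq_top.mpr ⟨x, mem_univ x, htop⟩, ENNReal.mul_top two_ne_zero,
      ENNReal.top_rpow_of_pos one_half_pos]
    exact le_top

/-- Model-misspecification bound: if `D` and `P` are joint pmfs on `X × Y` with the
same `X`-marginal `d`, and `f` takes values in `[0,1]`, then the difference of the
expectations of `f` is at most `√(2 · KL(D(·|X) ‖ P(·|X)))`, the conditional KL
divergence weighted by `d`. -/
theorem misspecification_conditional_KL_bound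
    {X Y : Type*} [Fintype X] [Fintype Y] [Nonempty X] [Nonempty Y]
    (D P : X → Y → ℝ) (d : X → ℝ)
    (hDnn : ∀ x y, 0 ≤ D x y) (hPnn : ∀ x y, 0 ≤ P x y)
    (hDsum : ∑ x, ∑ y, D x y = 1) (hPsum : ∑ x, ∑ y, P x y = 1)
    (hDmarg : ∀ x, ∑ y, D x y = d x) (hPmarg : ∀ x, ∑ y, P x y = d x)
    (f : X → Y → ℝ) (hf : ∀ x y, f x y ∈ Set.Icc (0 : ℝ) 1) :
    ENNReal.ofReal |(∑ x, ∑ y, f x y * D x y) - ∑ x, ∑ y, f x y * P x y| ≤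
      (2 * ∑ x, ENNReal.ofReal (d x) *
          klFin (fun y => D x y / d x) (fun y => P x y / d x)) ^ (1 / 2 : ℝ) :=
  misspecification_conditional_KL_bound_general D P d hDnn hPnn hDsum hPsum hDmarg hPmarg f hf
end
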